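/- Let 𝔞_• = {𝔞_m} be a finitely generated graded system of ideal sheaves on a domain Ω ∋ o in ℂⁿ. Then there exist m_0 > 0 and a choice of Siu plurisubharmonic function φ_{𝔞_•} associated to 𝔞_• such that φ_{𝔞_•} = φ_{𝔞_•,m_0} + O(1) near o, where φ_{𝔞_•,m_0} := log(Σ_{m=1}^{m_0} ε_m |𝔞_m|^{1/m}). -/
import Mathlib


/-!
Common framework for formalizing "A note on multiplier ideal sheaves on complex
spaces with singularities" (Zhenqian Li).

Modeling choices (documented once and for all):

* A complex space `X` of pure dimension `n` is modeled through a (local) embedding as an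
  analytic subset of a domain `Ω ⊆ ℂ^(n+r)`, together with a system of holomorphic
  generators of its ideal sheaf (the paper itself reduces all statements to this situation).
* Plurisubharmonic functions take values in `EReal` and are defined via upper
  semicontinuity together with the sub-mean-value property along complex lines, expressed
  through comparison with real parts of polynomials (harmonic majorants) on circles.
* The multiplier ideal `I(φ)` is defined via local integrability of `|f|² e^{-2φ}`.
* The Ohsawa extension measure integral `∫ g dV_X[Ψ]` is encoded by its defining
  limsup of band integrals `limsup_t (2r/σ_{2r-1}) ∫_{{-t-1<Ψ<-t}} g e^{-Ψ} dV`.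
* Coherence of an ideal sheaf (given stalkwise as a predicate on germs, represented by
  ambient holomorphic functions) is encoded as local finite generation.
* Complex manifolds are encoded by an atlas of `PartialHomeomorph`s with holomorphic
  transition maps; line bundles by transition cocycles over the atlas cover, singular
  hermitian metrics by families of local `EReal`-weights; cohomological statements are
  expressed elementwise through Čech cocycles/coboundaries for this cover.
-/

open MeasureTheory Filter Topology Set
open scoped ENNReal NNReal

noncomputable section

namespace LiMIS

/-! ### Extended-real weights -/

/-- `exp (-(c*a))` as an extended nonnegative real number, for an extended-real weight. -/
def expNegMul (c : ℝ) (a : EReal) : ℝ≥0∞ :=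
  if a = ⊥ then ⊤ else if a = ⊤ then 0 else ENNReal.ofReal (Real.exp (-(c * a.toReal)))

/-- Extended logarithm: `elog t = log t` for `t > 0` and `⊥` otherwise. -/
def elog (t : ℝ) : EReal := if t ≤ 0 then (⊥ : EReal) else ((Real.log t : ℝ) : EReal)

/-- `log ‖w‖` as an extended real number. -/
def elogAbs (w : ℂ) : EReal := elog ‖w‖

variable {N : ℕ}

/-! ### Holomorphic functions on domains in `ℂ^N` -/

/-- Holomorphic (= complex differentiable) on a subset of `ℂ^N`. -/
def HolOn (f : (Fin N → ℂ) → ℂ) (U : Set (Fin N → ℂ)) : Prop := DifferentiableOn ℂ f U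

/-- Germ of a holomorphic function at a point. -/
def HolAt (f : (Fin N → ℂ) → ℂ) (x : Fin N → ℂ) : Prop := ∃ U ∈ 𝓝 x, HolOn f U

/-- Membership in the ideal (of germs at `x`) generated by a finite family `gen`. -/
def GermSpanMem {k : ℕ} (gen : Fin k → (Fin N → ℂ) → ℂ) (x : Fin N → ℂ)
    (f : (Fin N → ℂ) → ℂ) : Prop :=
  ∃ V ∈ 𝓝 x, ∃ h : Fin k → (Fin N → ℂ) → ℂ,
    (∀ a, HolOn (h a) V) ∧ ∀ z ∈ V, f z = ∑ a, h a z * gen a z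

/-! ### Plurisubharmonic functions -/

/-- Plurisubharmonicity of an `EReal`-valued function on a subset of `ℂ^N`:
upper semicontinuity, finiteness (`≠ ⊤`), and the sub-mean-value inequality along complex
lines, expressed by majorization by harmonic polynomials on circles. -/
def PshOn (u : (Fin N → ℂ) → EReal) (Ω : Set (Fin N → ℂ)) : Prop :=
  UpperSemicontinuousOn u Ω ∧ (∀ x ∈ Ω, u x ≠ ⊤) ∧
  ∀ x ∈ Ω, ∀ (v : Fin N → ℂ) (r : ℝ), 0 < r →
    (∀ t : ℂ, ‖t‖ ≤ r → x + t • v ∈ Ω) →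
    ∀ p : Polynomial ℂ,
      (∀ t : ℂ, ‖t‖ = r → u (x + t • v) ≤ (((p.eval t).re : ℝ) : EReal)) →
      ∀ t : ℂ, ‖t‖ ≤ r → u (x + t • v) ≤ (((p.eval t).re : ℝ) : EReal)

/-- Rescaling of a weight by a real constant. -/
def scaleW (c : ℝ) (φ : (Fin N → ℂ) → EReal) : (Fin N → ℂ) → EReal :=
  fun z => ((c : ℝ) : EReal) * φ z

/-- The weight `c·log|g| = (c/2)·log(∑ |g i|²)` attached to a finite family `g`. -/
def logIdealW (c : ℝ) {m : ℕ} (g : Fin m → (Fin N → ℂ) → ℂ) : (Fin N → ℂ) → EReal :=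
  fun z => ((c / 2 : ℝ) : EReal) * elog (∑ i, ‖g i z‖ ^ 2)

/-! ### Multiplier ideals and log canonical thresholds on `ℂ^N` -/

/-- `f` belongs to the multiplier ideal `I(w)` at `x`: `f` is holomorphic near `x`
and `|f|² e^{-2w}` is integrable near `x` (Lebesgue measure). -/
def MIdealMem (w : (Fin N → ℂ) → EReal) (x : Fin N → ℂ) (f : (Fin N → ℂ) → ℂ) : Prop :=
  ∃ U ∈ 𝓝 x, HolOn f U ∧
    (∫⁻ z in U, (‖f z‖₊ : ℝ≥0∞) ^ 2 * expNegMul 2 (w z)) < ⊤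

/-- The log canonical threshold (complex singularity exponent) of the weight `u` at `x`:
`sup {c ≥ 0 | e^{-2cu} integrable near x}`. -/
def lctAt (u : (Fin N → ℂ) → EReal) (x : Fin N → ℂ) : ℝ :=
  sSup {c : ℝ | 0 ≤ c ∧ ∃ U ∈ 𝓝 x, (∫⁻ z in U, expNegMul (2 * c) (u z)) < ⊤}

/-! ### The Ohsawa extension measure -/

/-- The volume `σ_m` of the unit sphere in `ℝ^{m+1}`. -/
def sphereVolume (m : ℕ) : ℝ :=
  (m + 1) * (volume (Metric.ball (0 : EuclideanSpace ℝ (Fin (m + 1))) 1)).toReal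

/-- The polar function `Ψ = r·log(∑|g_i|²)` attached to generators `g` of the ideal of a
pure codimension `r` subspace. -/
def PsiOf (r : ℕ) {m : ℕ} (g : Fin m → (Fin N → ℂ) → ℂ) : (Fin N → ℂ) → EReal :=
  fun z => ((r : ℝ) : EReal) * elog (∑ i, ‖g i z‖ ^ 2)

/-- The integral of the density `w` against the Ohsawa extension measure `dV[Ψ]`
associated with the polar function `Ψ` (pure codimension `r`), encoded by its defining
limsup of band integrals. -/
def ohsawaLimsup (r : ℕ) (Ψ : (Fin N → ℂ) → EReal) (w : (Fin N → ℂ) → ℝ≥0∞)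
    (U : Set (Fin N → ℂ)) : ℝ≥0∞ :=
  Filter.limsup (fun t : ℝ =>
    ENNReal.ofReal (2 * r / sphereVolume (2 * r - 1)) *
      ∫⁻ z in U ∩ {z | (((-t - 1 : ℝ)) : EReal) < Ψ z ∧ Ψ z < ((-t : ℝ) : EReal)},
        w z * expNegMul 1 (Ψ z)) Filter.atTop

/-- Nadel–Ohsawa multiplier ideal membership at `x ∈ X`, for `X ⊆ ℂ^{n+r}` of pure
codimension `r` whose ideal sheaf is generated by `g`: the germ `f` (represented by an
ambient holomorphic function) satisfies that `|f|² e^{-2φ}` is locally integrable at `x`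
with respect to the Ohsawa extension measure `dV_X[Ψ]`, `Ψ = r log(∑|g_i|²)`. -/
def NOMem (r : ℕ) {m : ℕ} (g : Fin m → (Fin N → ℂ) → ℂ) (φ : (Fin N → ℂ) → EReal)
    (x : Fin N → ℂ) (f : (Fin N → ℂ) → ℂ) : Prop :=
  ∃ U ∈ 𝓝 x, HolOn f U ∧
    ohsawaLimsup r (PsiOf r g) (fun z => (‖f z‖₊ : ℝ≥0∞) ^ 2 * expNegMul 2 (φ z)) U < ⊤

/-! ### Analytic sets -/

/-- `A` is an analytic subset of `Ω`: locally the common zero set of finitely many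
holomorphic functions. -/
def IsAnalyticIn (A Ω : Set (Fin N → ℂ)) : Prop :=
  A ⊆ Ω ∧ ∀ x ∈ Ω, ∃ U ∈ 𝓝 x, ∃ (m : ℕ) (g : Fin m → (Fin N → ℂ) → ℂ),
    (∀ i, HolOn (g i) U) ∧ A ∩ U = {z ∈ U | ∀ i, g i z = 0}

/-- `x` is a regular point of `A` of (complex) dimension `d`: near `x`, `A` is the image
of a holomorphic embedding of an open subset of `ℂ^d`. -/
def IsRegOfDim (A : Set (Fin N → ℂ)) (d : ℕ) (x : Fin N → ℂ) : Prop :=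
  ∃ U ∈ 𝓝 x, ∃ V : Set (Fin d → ℂ), IsOpen V ∧
    ∃ ψ : (Fin d → ℂ) → (Fin N → ℂ),
      DifferentiableOn ℂ ψ V ∧ InjOn ψ V ∧ ψ '' V = A ∩ U ∧
      ∀ v ∈ V, Function.Injective (fderivWithin ℂ ψ V v)

/-- `x` is a regular (smooth) point of `A`. -/
def RegPt (A : Set (Fin N → ℂ)) (x : Fin N → ℂ) : Prop := ∃ d, IsRegOfDim A d x

/-- `A` has pure dimension `n`: regular points of dimension `n` are dense in `A` and all
regular points have dimension `n`. -/
def PureDim (A : Set (Fin N → ℂ)) (n : ℕ) : Prop :=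
  (∀ x ∈ A, x ∈ closure {y | y ∈ A ∧ IsRegOfDim A n y}) ∧
  ∀ d x, x ∈ A → IsRegOfDim A d x → d = n

/-- An irreducible analytic subset of `Ω`. -/
def IsIrreducibleAnalyticIn (A Ω : Set (Fin N → ℂ)) : Prop :=
  IsAnalyticIn A Ω ∧ A.Nonempty ∧
  ∀ B C : Set (Fin N → ℂ), IsAnalyticIn B Ω → IsAnalyticIn C Ω →
    A = B ∪ C → A = B ∨ A = C

/-- Plurisubharmonicity on an analytic set: local extension to an ambient
plurisubharmonic function. -/
def PshOnSet (A : Set (Fin N → ℂ)) (φ : (Fin N → ℂ) → EReal) : Prop :=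
  ∀ x ∈ A, ∃ U ∈ 𝓝 x, ∃ Φ : (Fin N → ℂ) → EReal,
    PshOn Φ U ∧ ∀ z ∈ A ∩ U, φ z = Φ z

/-- `φ ≢ -∞` on every irreducible component of `A` (for `A` of pure dimension this is
equivalent to: the locus `{φ = ⊥}` has empty interior in `A`). -/
def NowhereBotOn (A : Set (Fin N → ℂ)) (φ : (Fin N → ℂ) → EReal) : Prop :=
  ∀ x ∈ A, ¬ (∀ᶠ z in 𝓝[A] x, φ z = ⊥)

/-- `g` is a system of generators of the (full, reduced) ideal sheaf of `X` on `Ω`. -/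
def GeneratesIdealOf (Ω X : Set (Fin N → ℂ)) {m : ℕ}
    (g : Fin m → (Fin N → ℂ) → ℂ) : Prop :=
  (∀ i, HolOn (g i) Ω) ∧ (X = {z ∈ Ω | ∀ i, g i z = 0}) ∧
  ∀ x ∈ Ω, ∀ f : (Fin N → ℂ) → ℂ,
    (∃ U ∈ 𝓝 x, HolOn f U ∧ ∀ z ∈ X ∩ U, f z = 0) →
    ∃ V ∈ 𝓝 x, ∃ h : Fin m → (Fin N → ℂ) → ℂ,
      (∀ i, HolOn (h i) V) ∧ ∀ z ∈ V, f z = ∑ i, h i z * g i z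

/-! ### Sheaf-theoretic notions for stalkwise-given ideals -/

/-- A stalkwise-given collection `I` of germs on `X` is closed under the `O_X`-ideal
operations. -/
def IdealClosed (X : Set (Fin N → ℂ))
    (I : (Fin N → ℂ) → ((Fin N → ℂ) → ℂ) → Prop) : Prop :=
  ∀ x ∈ X, (∀ f g, I x f → I x g → I x (f + g)) ∧
    ∀ f h, I x f → HolAt h x → I x (fun z => h z * f z)

/-- Local finite generation (coherence) of a stalkwise-given ideal on `X` (germs being
represented by ambient holomorphic functions, equality of germs being equality on `X`). -/
def LocFinGen (X : Set (Fin N → ℂ))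
    (I : (Fin N → ℂ) → ((Fin N → ℂ) → ℂ) → Prop) : Prop :=
  ∀ x ∈ X, ∃ U ∈ 𝓝 x, ∃ (k : ℕ) (g : Fin k → (Fin N → ℂ) → ℂ),
    (∀ i, HolOn (g i) U) ∧ (∀ i, ∀ y ∈ X ∩ U, I y (g i)) ∧
    ∀ y ∈ X ∩ U, ∀ f, I y f →
      ∃ V ∈ 𝓝 y, ∃ h : Fin k → (Fin N → ℂ) → ℂ,
        (∀ i, HolOn (h i) V) ∧ ∀ z ∈ X ∩ V, f z = ∑ i, h i z * g i z

/-- The complex subspace cut out on `X` by the stalkwise ideal `I` is reduced at `x`. -/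
def SubschemeReducedAt (I : (Fin N → ℂ) → ((Fin N → ℂ) → ℂ) → Prop)
    (x : Fin N → ℂ) : Prop :=
  ∀ f, HolAt f x → (∃ k : ℕ, 0 < k ∧ I x (fun z => (f z) ^ k)) → I x f

/-! ### Normality, weak normality, rationality -/

/-- `f` (a function on `A`) is holomorphic on the regular part of `A` (inside `U`). -/
def HoloOnRegPart (A : Set (Fin N → ℂ)) (f : (Fin N → ℂ) → ℂ)
    (U : Set (Fin N → ℂ)) : Prop :=
  ∀ x ∈ A ∩ U, RegPt A x →
    ∃ W ∈ 𝓝 x, ∃ F, HolOn F W ∧ ∀ z ∈ A ∩ W ∩ U, F z = f z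

/-- Weak normality of the reduced complex space `A` at `x`: every continuous function
near `x` on `A` which is holomorphic on the regular part of `A` is holomorphic on `A`. -/
def WeaklyNormalAt (A : Set (Fin N → ℂ)) (x : Fin N → ℂ) : Prop :=
  ∀ U ∈ 𝓝 x, ∀ f : (Fin N → ℂ) → ℂ, ContinuousOn f (A ∩ U) → HoloOnRegPart A f U →
    ∃ V ∈ 𝓝 x, V ⊆ U ∧ ∃ F, HolOn F V ∧ ∀ z ∈ A ∩ V, F z = f z

/-- Normality of the reduced complex space `A` at `x`, via the extension property for
weakly holomorphic (locally bounded, holomorphic on the regular part) functions. -/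
def NormalAt (A : Set (Fin N → ℂ)) (x : Fin N → ℂ) : Prop :=
  ∀ U ∈ 𝓝 x, ∀ f : (Fin N → ℂ) → ℂ,
    (∀ y ∈ A ∩ U, ∃ W ∈ 𝓝 y, ∃ C : ℝ, ∀ z ∈ A ∩ U ∩ W, ‖f z‖ ≤ C) →
    HoloOnRegPart A f U →
    ∃ V ∈ 𝓝 x, V ⊆ U ∧ ∃ F, HolOn F V ∧ ∀ z ∈ A ∩ V, RegPt A z → F z = f z

/-! ### Jacobian norms, Mather–Jacobian multiplier ideals -/

/-- Sum of squared norms of all `r×r` minors of the Jacobian matrix of the family `g`. -/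
def jacNormSq (r : ℕ) {m : ℕ} (g : Fin m → (Fin N → ℂ) → ℂ) (z : Fin N → ℂ) : ℝ :=
  ∑ ρ : Fin r → Fin m, ∑ τ : Fin r → Fin N,
    ‖(Matrix.of fun a b : Fin r => fderiv ℂ (g (ρ a)) z (Pi.single (τ b) 1)).det‖ ^ 2

/-- Mather–Jacobian multiplier ideal membership for `𝔞^c` (with `𝔞` generated by the
family `a`) at `x ∈ X`, for `X ⊆ ℂ^N` of pure dimension `n` and codimension `r` with
ideal generators `g`.  Encoded through the analytic description coming from the Nash
blow-up/Mather discrepancy: integrability on `X` of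
`|f|² (∑|a_j|²)^{-c} / |Jac_X|²` against `2n`-dimensional Hausdorff measure. -/
def MJMem (n r : ℕ) (X : Set (Fin N → ℂ)) {m : ℕ} (g : Fin m → (Fin N → ℂ) → ℂ)
    (c : ℝ) {k : ℕ} (a : Fin k → (Fin N → ℂ) → ℂ)
    (x : Fin N → ℂ) (f : (Fin N → ℂ) → ℂ) : Prop :=
  ∃ U ∈ 𝓝 x, HolOn f U ∧
    (∫⁻ z in X ∩ U,
        (‖f z‖₊ : ℝ≥0∞) ^ 2 * expNegMul c (elog (∑ j, ‖a j z‖ ^ 2)) *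
          (ENNReal.ofReal (jacNormSq r g z))⁻¹ ∂(μH[(2 * n : ℝ)])) < ⊤

/-! ### Adjoint ideal sheaves (ambient model) -/

/-- `Adj` is "the" analytic adjoint ideal sheaf of the psh weight `φ` along
`X ⊆ Ω ⊆ ℂ^N` (closed, pure codimension `r`, ideal generators `g`): a coherent ideal
sheaf sitting in the adjunction exact sequence
`0 → I(φ + r·log|I_X|) → Adj → i_* Î(φ|_X) → 0`. -/
def IsAdjointIdealFor (r : ℕ) (Ω X : Set (Fin N → ℂ)) {m : ℕ}
    (g : Fin m → (Fin N → ℂ) → ℂ) (φ : (Fin N → ℂ) → EReal)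
    (Adj : (Fin N → ℂ) → ((Fin N → ℂ) → ℂ) → Prop) : Prop :=
  (∀ x ∈ Ω, ∀ f, Adj x f → HolAt f x) ∧
  IdealClosed Ω Adj ∧ LocFinGen Ω Adj ∧
  -- the natural inclusion `ι : I(φ + r log|I_X|) → Adj`
  (∀ x ∈ Ω, ∀ f, MIdealMem (fun z => φ z + logIdealW r g z) x f → Adj x f) ∧
  -- exactness in the middle: the kernel of the restriction is exactly `I(φ + r log|I_X|)`
  (∀ x ∈ Ω, ∀ f, HolAt f x →
    ((Adj x f ∧ ∀ᶠ z in 𝓝[X] x, f z = 0) ↔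
      MIdealMem (fun z => φ z + logIdealW r g z) x f)) ∧
  -- the restriction map `ρ` lands in the Nadel–Ohsawa multiplier ideal …
  (∀ x ∈ X, ∀ f, Adj x f → NOMem r g φ x f) ∧
  -- … and is surjective onto it
  (∀ x ∈ X, ∀ f, NOMem r g φ x f → ∃ F, Adj x F ∧ ∀ᶠ z in 𝓝[X] x, F z = f z)

/-! ### Orders of vanishing, symbolic powers, graded systems (analytic) -/

/-- `ord_x f ≥ t`. -/
def OrdAtLeast (f : (Fin N → ℂ) → ℂ) (x : Fin N → ℂ) (t : ℕ) : Prop :=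
  ∀ j < t, iteratedFDeriv ℂ j f x = 0

/-- Membership at `x` in the `m_Λ`-th symbolic power of the ideal of `⋃ k, A k`
(with multiplicity `mΛ k` along the component `A k`); by upper semicontinuity of the
vanishing order, "order `≥ mΛ k` at a general point of `A k`" is equivalent to
"order `≥ mΛ k` at every point of `A k`". -/
def SymbMem {s : ℕ} (A : Fin s → Set (Fin N → ℂ)) (mΛ : Fin s → ℕ)
    (x : Fin N → ℂ) (f : (Fin N → ℂ) → ℂ) : Prop :=
  ∃ U ∈ 𝓝 x, HolOn f U ∧ ∀ k, ∀ z ∈ A k ∩ U, OrdAtLeast f z (mΛ k)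

/-- The log canonical threshold at `x` of an ideal given stalkwise by a predicate `P`
(extended-real-valued, via finite families of members of the ideal). -/
def lctPredE (P : (Fin N → ℂ) → ((Fin N → ℂ) → ℂ) → Prop) (x : Fin N → ℂ) : ℝ≥0∞ :=
  sSup {c : ℝ≥0∞ | c ≠ ⊤ ∧ ∃ U ∈ 𝓝 x, ∃ (k : ℕ) (g : Fin k → (Fin N → ℂ) → ℂ),
    (∀ a, ∀ z ∈ U, P z (g a)) ∧
    (∫⁻ z in U, expNegMul c.toReal (elog (∑ a, ‖g a z‖ ^ 2))) < ⊤}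

/-- Multiplier ideal membership `f ∈ I(c·𝔞)` at `x` for an ideal given stalkwise by a
predicate `P`. -/
def MIdealPredMem (c : ℝ) (P : (Fin N → ℂ) → ((Fin N → ℂ) → ℂ) → Prop)
    (x : Fin N → ℂ) (f : (Fin N → ℂ) → ℂ) : Prop :=
  ∃ U ∈ 𝓝 x, HolOn f U ∧ ∃ (k : ℕ) (g : Fin k → (Fin N → ℂ) → ℂ),
    (∀ a, ∀ z ∈ U, P z (g a)) ∧
    (∫⁻ z in U, (‖f z‖₊ : ℝ≥0∞) ^ 2 * expNegMul c (elog (∑ a, ‖g a z‖ ^ 2))) < ⊤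

/-- Asymptotic multiplier ideal membership `f ∈ I(𝔞_•)` at `x` for a graded family of
stalkwise ideals. -/
def AsympMIdealMem (P : ℕ → (Fin N → ℂ) → ((Fin N → ℂ) → ℂ) → Prop)
    (x : Fin N → ℂ) (f : (Fin N → ℂ) → ℂ) : Prop :=
  ∃ m : ℕ, 0 < m ∧ MIdealPredMem ((1 : ℝ) / m) (P m) x f

/-- The log canonical threshold at `x` of a graded system of stalkwise ideals:
`sup_m m·lct(𝔞_m)`. -/
def gradedLctE (P : ℕ → (Fin N → ℂ) → ((Fin N → ℂ) → ℂ) → Prop)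
    (x : Fin N → ℂ) : ℝ≥0∞ :=
  ⨆ m : ℕ, (((m + 1 : ℕ) : ℝ≥0∞) * lctPredE (P (m + 1)) x)

/-- `φ` has analytic singularities on `Ω`: locally `φ = (c/2)·log ∑|g_i|² + O(1)`. -/
def AnalyticSingOn (φ : (Fin N → ℂ) → EReal) (Ω : Set (Fin N → ℂ)) : Prop :=
  ∀ x ∈ Ω, ∃ U ∈ 𝓝 x, ∃ (c : ℝ) (k : ℕ) (g : Fin k → (Fin N → ℂ) → ℂ) (C : ℝ),
    0 ≤ c ∧ (∀ i, HolOn (g i) U) ∧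
    ∀ z ∈ U, φ z ≤ logIdealW c g z + ((C : ℝ) : EReal) ∧
      logIdealW c g z ≤ φ z + ((C : ℝ) : EReal)

/-- Slope of `φ|_X` at `x` (cf. BBEGZ): the maximal `γ ≥ 0` with
`φ|_X ≤ γ log Σ|z_i - x_i| + O(1)`. -/
def slopeAt (X : Set (Fin N → ℂ)) (φ : (Fin N → ℂ) → EReal) (x : Fin N → ℂ) : ℝ :=
  sSup {γ : ℝ | 0 ≤ γ ∧ ∃ U ∈ 𝓝 x, ∃ C : ℝ, ∀ z ∈ X ∩ U,
    φ z ≤ ((γ / 2 : ℝ) : EReal) * elog (∑ i, ‖z i - x i‖ ^ 2) + ((C : ℝ) : EReal)}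

/-- A semi-log-canonical "minimal defining function" of a hypersurface germ at `x`:
`h` is holomorphic, vanishes at `x`, generates the full (radical) vanishing ideal of its
zero set near `x` (minimality/reducedness), and the pair is log canonical, i.e. the log
canonical threshold of `log|h|` at `x` equals `1`. -/
def IsSLCMinimalDefiningAt (h : (Fin N → ℂ) → ℂ) (x : Fin N → ℂ) : Prop :=
  HolAt h x ∧ h x = 0 ∧
  (∀ f, HolAt f x → (∃ V ∈ 𝓝 x, HolOn f V ∧ ∀ z ∈ V, h z = 0 → f z = 0) →
    GermSpanMem (fun _ : Fin 1 => h) x f) ∧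
  lctAt (fun z => elogAbs (h z)) x = 1

/-- A local biholomorphism (change of variables) sending `x` to `y`. -/
def LocalBiholoAt (Φ Ψ : (Fin N → ℂ) → (Fin N → ℂ)) (x y : Fin N → ℂ) : Prop :=
  Φ x = y ∧ ∃ U ∈ 𝓝 x, ∃ V ∈ 𝓝 y,
    (∀ k, HolOn (fun z => Φ z k) U) ∧ (∀ k, HolOn (fun z => Ψ z k) V) ∧
    (∀ z ∈ U, Ψ (Φ z) = z) ∧ (∀ w ∈ V, Φ (Ψ w) = w)

end LiMIS
namespace LiMIS

/-- Auxiliary: bound on the norm of a product of a list of complex numbers, each bounded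
by a power of `Q`. -/
private lemma norm_list_prod_le' {ι : Type*} (v : ι → ℂ) (w : ι → ℕ) (Q : ℝ)
    (hQ : 0 ≤ Q) :
    ∀ L : List ι, (∀ p ∈ L, ‖v p‖ ≤ Q ^ w p) →
      ‖(L.map v).prod‖ ≤ Q ^ (L.map w).sum := by
  intro L
  induction L with
  | nil => simp
  | cons p L ih =>
    intro hb
    simp only [List.map_cons, List.prod_cons, List.sum_cons]
    rw [norm_mul, pow_add]
    exact mul_le_mul (hb p (by simp)) (ih fun q hq => hb q (by simp [hq]))
      (norm_nonneg _) (pow_nonneg hQ _)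

/-- Auxiliary: a local multiplicative bound on a compact set gives a global one. -/
private lemma locglob {α : Type*} [TopologicalSpace α] {K : Set α}
    (hK : IsCompact K) (g h : α → ℝ) (hh : ∀ z, 0 ≤ h z)
    (hloc : ∀ x ∈ K, ∃ U ∈ 𝓝 x, ∃ c : ℝ, ∀ z ∈ U, g z ≤ c * h z) :
    ∃ c : ℝ, ∀ z ∈ K, g z ≤ c * h z := by
  choose U hU c hc using hloc
  obtain ⟨t, ht⟩ := hK.elim_nhds_subcover' U hU
  refine ⟨∑ x ∈ t, max (c x.1 x.2) 0, fun z hz => ?_⟩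
  obtain ⟨x, hxt, hxU⟩ : ∃ x ∈ t, z ∈ U x.1 x.2 := by
    simpa using ht hz
  calc g z ≤ c x.1 x.2 * h z := hc x.1 x.2 z hxU
    _ ≤ (∑ y ∈ t, max (c y.1 y.2) 0) * h z := by
        refine mul_le_mul_of_nonneg_right ?_ (hh z)
        refine le_trans (le_max_left _ _)
          (Finset.single_le_sum (f := fun y : {x // x ∈ K} => max (c y.1 y.2) 0)
            (fun y _ => le_max_right _ _) hxt)

/-- Auxiliary: the sequence of coefficients `ε` used in the Siu function. -/
private noncomputable def epsAux (m₁ : ℕ) (C : ℕ → ℝ) (m : ℕ) : ℝ :=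
  if m ≤ m₁ then 1 else (1/2 : ℝ) ^ m / C m

/-- Auxiliary: the `m`-th term of the series defining the Siu function. -/
private noncomputable def FAux {n : ℕ} {k : ℕ → ℕ}
    (a : (m : ℕ) → Fin (k m) → (Fin n → ℂ) → ℂ)
    (m₁ : ℕ) (C : ℕ → ℝ) (m : ℕ) (z : Fin n → ℂ) : ℝ :=
  if 1 ≤ m then epsAux m₁ C m * (∑ s, ‖a m s z‖) ^ ((1 : ℝ) / m) else 0

/-- Lemma `Siu_finite`:
Let `𝔞_• = {𝔞_m}` be a finitely generated graded system of ideal sheaves on a domain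
`Ω ∋ o` in `ℂⁿ` (each `𝔞_m` given by the finite family of holomorphic generators
`a m ·`; gradedness and finite generation of the Rees algebra in degrees `≤ m₁` are the
hypotheses `hgraded`, `hfg`).  Then there exist `m₀ > 0` and a choice of Siu
plurisubharmonic function `φ_{𝔞_•} = log ∑_{m≥1} ε_m |𝔞_m|^{1/m}` associated to `𝔞_•`
(positive `ε_m` decaying fast enough that the series converges locally uniformly on a
neighbourhood of `o`) such that `φ_{𝔞_•} = φ_{𝔞_•,m₀} + O(1)` near `o`, where
`φ_{𝔞_•,m₀} = log ∑_{m=1}^{m₀} ε_m |𝔞_m|^{1/m}` (the `O(1)`-comparison of the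
logarithms is expressed as a two-sided multiplicative comparison of the sums). -/
theorem siu_psh_function_of_finitely_generated_graded_system
    {n : ℕ} (Ω : Set (Fin n → ℂ)) (hΩ : IsOpen Ω) (o : Fin n → ℂ) (ho : o ∈ Ω)
    (k : ℕ → ℕ) (a : (m : ℕ) → Fin (k m) → (Fin n → ℂ) → ℂ)
    (hhol : ∀ m i, HolOn (a m i) Ω)
    -- `𝔞₀ = O_Ω`
    (h0 : ∃ i : Fin (k 0), ∀ z ∈ Ω, a 0 i z = 1)
    -- graded system: `𝔞_i · 𝔞_j ⊆ 𝔞_{i+j}`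
    (hgraded : ∀ i j : ℕ, 1 ≤ i → 1 ≤ j → ∀ (s : Fin (k i)) (t : Fin (k j)),
      ∀ x ∈ Ω, GermSpanMem (a (i + j)) x (fun z => a i s z * a j t z))
    -- the Rees algebra is generated in degrees ≤ m₁
    (hfg : ∃ m₁ : ℕ, 0 < m₁ ∧ ∀ m : ℕ, m₁ < m → ∀ s : Fin (k m), ∀ x ∈ Ω,
      ∃ V ∈ 𝓝 x, ∃ (T : ℕ) (hcoef : Fin T → (Fin n → ℂ) → ℂ)
        (mon : Fin T → List (Σ d : ℕ, Fin (k d))),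
        (∀ t, HolOn (hcoef t) V) ∧
        (∀ t, ((mon t).map Sigma.fst).sum = m ∧ ∀ p ∈ mon t, p.1 ≤ m₁ ∧ 1 ≤ p.1) ∧
        ∀ z ∈ V, a m s z = ∑ t, hcoef t z * ((mon t).map (fun p => a p.1 p.2 z)).prod) :
    ∃ (m₀ : ℕ) (ε : ℕ → ℝ) (W : Set (Fin n → ℂ)), 0 < m₀ ∧ (∀ m, 0 < ε m) ∧
      W ∈ 𝓝 o ∧ W ⊆ Ω ∧
      -- the series defining the Siu plurisubharmonic function converges locally
      -- uniformly on W
      (∀ K, K ⊆ W → IsCompact K → TendstoUniformlyOn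
        (fun (M : ℕ) (z : Fin n → ℂ) =>
          ∑ m ∈ Finset.Icc 1 M, ε m * (∑ s, ‖a m s z‖) ^ ((1 : ℝ) / m))
        (fun z => ∑' m : ℕ, if 1 ≤ m then ε m * (∑ s, ‖a m s z‖) ^ ((1 : ℝ) / m) else 0)
        Filter.atTop K) ∧
      -- φ_{𝔞•} = φ_{𝔞•,m₀} + O(1) near o
      (∃ C : ℝ, 1 ≤ C ∧ ∀ z ∈ W,
        (∑' m : ℕ, if 1 ≤ m then ε m * (∑ s, ‖a m s z‖) ^ ((1 : ℝ) / m) else 0) ≤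
            C * (∑ m ∈ Finset.Icc 1 m₀, ε m * (∑ s, ‖a m s z‖) ^ ((1 : ℝ) / m)) ∧
        (∑ m ∈ Finset.Icc 1 m₀, ε m * (∑ s, ‖a m s z‖) ^ ((1 : ℝ) / m)) ≤
            C * (∑' m : ℕ, if 1 ≤ m then ε m * (∑ s, ‖a m s z‖) ^ ((1 : ℝ) / m) else 0)) := by
  classical
  obtain ⟨m₁, hm₁pos, hfg'⟩ := hfg
  obtain ⟨r, hr, hball⟩ := Metric.nhds_basis_closedBall.mem_iff.mp (hΩ.mem_nhds ho)
  have hK'c : IsCompact (Metric.closedBall o r) := isCompact_closedBall o r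
  have hK'Ω : Metric.closedBall o r ⊆ Ω := hball
  have hoK' : o ∈ Metric.closedBall o r := Metric.mem_closedBall_self hr.le
  -- basic positivity facts
  have hSnn : ∀ (m : ℕ) (z : Fin n → ℂ), (0:ℝ) ≤ ∑ s, ‖a m s z‖ :=
    fun m z => Finset.sum_nonneg fun s _ => norm_nonneg _
  have hxnn : ∀ (m : ℕ) (z : Fin n → ℂ), (0:ℝ) ≤ (∑ s, ‖a m s z‖) ^ ((1:ℝ)/m) :=
    fun m z => Real.rpow_nonneg (hSnn m z) _
  have hQnn : ∀ z : Fin n → ℂ,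
      (0:ℝ) ≤ ∑ d ∈ Finset.Icc 1 m₁, (∑ s, ‖a d s z‖) ^ ((1:ℝ)/d) :=
    fun z => Finset.sum_nonneg fun d _ => hxnn d z
  have hxQ : ∀ d : ℕ, 1 ≤ d → d ≤ m₁ → ∀ z : Fin n → ℂ,
      (∑ s, ‖a d s z‖) ^ ((1:ℝ)/d) ≤
        ∑ d' ∈ Finset.Icc 1 m₁, (∑ s, ‖a d' s z‖) ^ ((1:ℝ)/d') :=
    fun d h1 h2 z =>
      Finset.single_le_sum (f := fun d' => (∑ s, ‖a d' s z‖) ^ ((1:ℝ)/d'))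
        (fun d' _ => hxnn d' z) (Finset.mem_Icc.mpr ⟨h1, h2⟩)
  have hSx : ∀ d : ℕ, 1 ≤ d → ∀ z : Fin n → ℂ,
      (∑ s, ‖a d s z‖) = ((∑ s, ‖a d s z‖) ^ ((1:ℝ)/d)) ^ d := by
    intro d hd z
    have hdne : ((d:ℝ)) ≠ 0 := Nat.cast_ne_zero.mpr (by omega)
    rw [← Real.rpow_natCast ((∑ s, ‖a d s z‖) ^ ((1:ℝ)/d)) d,
      ← Real.rpow_mul (hSnn d z)]
    rw [show (1:ℝ)/d * d = 1 by field_simp, Real.rpow_one]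
  have habound : ∀ (d : ℕ) (i : Fin (k d)) (z : Fin n → ℂ), 1 ≤ d → d ≤ m₁ →
      ‖a d i z‖ ≤ (∑ d' ∈ Finset.Icc 1 m₁, (∑ s, ‖a d' s z‖) ^ ((1:ℝ)/d')) ^ d := by
    intro d i z h1 h2
    calc ‖a d i z‖ ≤ ∑ s, ‖a d s z‖ :=
          Finset.single_le_sum (f := fun s => ‖a d s z‖) (fun s _ => norm_nonneg _)
            (Finset.mem_univ i)
      _ = ((∑ s, ‖a d s z‖) ^ ((1:ℝ)/d)) ^ d := hSx d h1 z
      _ ≤ _ := pow_le_pow_left₀ (hxnn d z) (hxQ d h1 h2 z) d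
  -- local bound from finite generation
  have hloc : ∀ m : ℕ, m₁ < m → ∀ s : Fin (k m), ∀ x ∈ Metric.closedBall o r,
      ∃ U ∈ 𝓝 x, ∃ c : ℝ, ∀ z ∈ U, ‖a m s z‖ ≤
        c * (∑ d ∈ Finset.Icc 1 m₁, (∑ s', ‖a d s' z‖) ^ ((1:ℝ)/d)) ^ m := by
    intro m hm s x hx
    obtain ⟨V, hV, T, hcoef, mon, hhc, hmon, heq⟩ := hfg' m hm s x (hK'Ω hx)
    have hev : ∀ᶠ z in 𝓝 x, ∀ t : Fin T, ‖hcoef t z‖ < ‖hcoef t x‖ + 1 := by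
      rw [Filter.eventually_all]
      intro t
      have hct : ContinuousAt (fun z => ‖hcoef t z‖) x :=
        ((DifferentiableOn.continuousOn (hhc t)).continuousAt hV).norm
      exact hct.eventually_lt continuousAt_const (lt_add_one _)
    refine ⟨V ∩ {z | ∀ t, ‖hcoef t z‖ < ‖hcoef t x‖ + 1}, Filter.inter_mem hV hev,
      ∑ t, (‖hcoef t x‖ + 1), fun z hz => ?_⟩
    rw [heq z hz.1, Finset.sum_mul]
    refine le_trans (norm_sum_le _ _) (Finset.sum_le_sum fun t _ => ?_)
    rw [norm_mul]
    refine mul_le_mul (le_of_lt (hz.2 t)) ?_ (norm_nonneg _) (by positivity)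
    have hprod := norm_list_prod_le' (fun p : (Σ d : ℕ, Fin (k d)) => a p.1 p.2 z)
      Sigma.fst _ (hQnn z) (mon t)
      (fun p hp => habound p.1 p.2 z ((hmon t).2 p hp).2 ((hmon t).2 p hp).1)
    rwa [(hmon t).1] at hprod
  -- global bound on the closed ball
  have hglob : ∀ m : ℕ, ∃ C : ℝ, 1 ≤ C ∧ (m₁ < m → ∀ z ∈ Metric.closedBall o r,
      (∑ s, ‖a m s z‖) ≤
        C * (∑ d ∈ Finset.Icc 1 m₁, (∑ s', ‖a d s' z‖) ^ ((1:ℝ)/d)) ^ m) := by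
    intro m
    by_cases hm : m₁ < m
    · have hs : ∀ s : Fin (k m), ∃ c : ℝ, ∀ z ∈ Metric.closedBall o r, ‖a m s z‖ ≤
          c * (∑ d ∈ Finset.Icc 1 m₁, (∑ s', ‖a d s' z‖) ^ ((1:ℝ)/d)) ^ m :=
        fun s => locglob hK'c _ _ (fun z => by positivity) (hloc m hm s)
      choose c hc using hs
      refine ⟨max (∑ s, c s) 1, le_max_right _ _, fun _ z hz => ?_⟩
      calc (∑ s, ‖a m s z‖)
          ≤ ∑ s, c s * (∑ d ∈ Finset.Icc 1 m₁, (∑ s', ‖a d s' z‖) ^ ((1:ℝ)/d)) ^ m :=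
            Finset.sum_le_sum fun s _ => hc s z hz
        _ = (∑ s, c s) * (∑ d ∈ Finset.Icc 1 m₁, (∑ s', ‖a d s' z‖) ^ ((1:ℝ)/d)) ^ m :=
            (Finset.sum_mul _ _ _).symm
        _ ≤ max (∑ s, c s) 1 *
              (∑ d ∈ Finset.Icc 1 m₁, (∑ s', ‖a d s' z‖) ^ ((1:ℝ)/d)) ^ m :=
            mul_le_mul_of_nonneg_right (le_max_left _ _) (by positivity)
    · exact ⟨1, le_rfl, fun h => absurd h hm⟩
  choose C hC1 hCQ using hglob
  have hCpos : ∀ m, (0:ℝ) < C m := fun m => lt_of_lt_of_le zero_lt_one (hC1 m)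
  -- consequence for the `m`-th roots
  have hxwC : ∀ m : ℕ, m₁ < m → ∀ z ∈ Metric.closedBall o r,
      (∑ s, ‖a m s z‖) ^ ((1:ℝ)/m) ≤
        C m * ∑ d ∈ Finset.Icc 1 m₁, (∑ s', ‖a d s' z‖) ^ ((1:ℝ)/d) := by
    intro m hm z hz
    have hmne : ((m:ℝ)) ≠ 0 := Nat.cast_ne_zero.mpr (by omega)
    have hmpos : (0:ℝ) < m := by positivity
    set Qz := ∑ d ∈ Finset.Icc 1 m₁, (∑ s', ‖a d s' z‖) ^ ((1:ℝ)/d) with hQz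
    have h1 : (∑ s, ‖a m s z‖) ^ ((1:ℝ)/m) ≤ (C m * Qz ^ m) ^ ((1:ℝ)/m) :=
      Real.rpow_le_rpow (hSnn m z) (hCQ m hm z hz) (by positivity)
    have h2 : (C m * Qz ^ m) ^ ((1:ℝ)/m) = (C m) ^ ((1:ℝ)/m) * Qz := by
      rw [Real.mul_rpow (hCpos m).le (by positivity)]
      congr 1
      rw [← Real.rpow_natCast Qz m, ← Real.rpow_mul (hQnn z),
        mul_one_div, div_self hmne, Real.rpow_one]
    have h3 : (C m) ^ ((1:ℝ)/m) ≤ C m := by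
      have h4 := Real.rpow_le_rpow_of_exponent_le (hC1 m)
        (show (1:ℝ)/m ≤ 1 by
          rw [div_le_one hmpos]; exact_mod_cast (by omega : 1 ≤ m))
      rwa [Real.rpow_one] at h4
    calc (∑ s, ‖a m s z‖) ^ ((1:ℝ)/m) ≤ (C m) ^ ((1:ℝ)/m) * Qz := h2 ▸ h1
      _ ≤ C m * Qz := mul_le_mul_of_nonneg_right h3 (hQnn z)
  -- uniform bounds for the individual terms
  have hbm : ∀ m : ℕ, ∃ b : ℝ, ∀ z ∈ Metric.closedBall o r,
      (∑ s, ‖a m s z‖) ^ ((1:ℝ)/m) ≤ b := by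
    intro m
    have hcont : ContinuousOn (fun z => (∑ s, ‖a m s z‖) ^ ((1:ℝ)/m))
        (Metric.closedBall o r) := by
      refine ContinuousOn.rpow_const ?_ (fun z _ => Or.inr (by positivity))
      exact continuousOn_finset_sum _ fun s _ =>
        ((DifferentiableOn.continuousOn (hhol m s)).mono hK'Ω).norm
    obtain ⟨b, hb⟩ := hK'c.exists_bound_of_continuousOn hcont
    exact ⟨b, fun z hz => (Real.le_norm_self _).trans (hb z hz)⟩
  choose b hb using hbm
  have hQD : ∀ z ∈ Metric.closedBall o r,
      (∑ d ∈ Finset.Icc 1 m₁, (∑ s', ‖a d s' z‖) ^ ((1:ℝ)/d)) ≤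
        ∑ d ∈ Finset.Icc 1 m₁, b d :=
    fun z hz => Finset.sum_le_sum fun d _ => hb d z hz
  have hD0 : (0:ℝ) ≤ ∑ d ∈ Finset.Icc 1 m₁, b d := (hQnn o).trans (hQD o hoK')
  -- facts about ε and F
  have hεpos : ∀ m, 0 < epsAux m₁ C m := by
    intro m
    unfold epsAux
    split_ifs
    · norm_num
    · exact div_pos (by positivity) (hCpos m)
  have hFnn : ∀ (m : ℕ) (z : Fin n → ℂ), 0 ≤ FAux a m₁ C m z := by
    intro m z
    unfold FAux
    split_ifs
    · exact mul_nonneg (hεpos m).le (hxnn m z)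
    · exact le_rfl
  have hFQ : ∀ m : ℕ, m₁ < m → ∀ z ∈ Metric.closedBall o r,
      FAux a m₁ C m z ≤
        (1/2:ℝ)^m * ∑ d ∈ Finset.Icc 1 m₁, (∑ s', ‖a d s' z‖) ^ ((1:ℝ)/d) := by
    intro m hm z hz
    set Qz := ∑ d ∈ Finset.Icc 1 m₁, (∑ s', ‖a d s' z‖) ^ ((1:ℝ)/d) with hQz
    have hcne : C m ≠ 0 := (hCpos m).ne'
    unfold FAux epsAux
    rw [if_pos (by omega : 1 ≤ m), if_neg (by omega : ¬ m ≤ m₁)]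
    calc (1/2:ℝ)^m / C m * (∑ s, ‖a m s z‖) ^ ((1:ℝ)/m)
        ≤ (1/2:ℝ)^m / C m * (C m * Qz) :=
          mul_le_mul_of_nonneg_left (hxwC m hm z hz)
            (div_nonneg (by positivity) (hCpos m).le)
      _ = (1/2:ℝ)^m * Qz := by field_simp
  have hFD : ∀ (m : ℕ) (z : Fin n → ℂ), z ∈ Metric.closedBall o r →
      FAux a m₁ C m z ≤
        (if m ≤ m₁ then max (b m) 0 else (1/2:ℝ)^m * ∑ d ∈ Finset.Icc 1 m₁, b d) := by
    intro m z hz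
    by_cases hm : m ≤ m₁
    · rw [if_pos hm]
      unfold FAux epsAux
      split_ifs with h1
      · rw [one_mul]
        exact (hb m z hz).trans (le_max_left _ _)
      · exact le_max_right _ _
    · rw [if_neg hm]
      exact (hFQ m (by omega) z hz).trans
        (mul_le_mul_of_nonneg_left (hQD z hz) (by positivity))
  -- summability of the dominating series
  have hu : Summable (fun m : ℕ =>
      if m ≤ m₁ then max (b m) 0 else (1/2:ℝ)^m * ∑ d ∈ Finset.Icc 1 m₁, b d) := by
    rw [← summable_nat_add_iff (m₁+1)]
    have hg : Summable (fun nu : ℕ =>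
        ((1/2:ℝ)^(m₁+1) * ∑ d ∈ Finset.Icc 1 m₁, b d) * (1/2:ℝ)^nu) :=
      (summable_geometric_of_lt_one (by norm_num) (by norm_num)).mul_left _
    refine hg.congr fun nu => ?_
    rw [if_neg (by omega), pow_add]
    ring
  have hFsum : ∀ z ∈ Metric.closedBall o r, Summable (fun m => FAux a m₁ C m z) :=
    fun z hz => Summable.of_nonneg_of_le (fun m => hFnn m z) (fun m => hFD m z hz) hu
  -- conversion between `Icc 1 M` sums and `range (M+1)` sums
  have hkey : ∀ (M : ℕ) (z : Fin n → ℂ),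
      (∑ m ∈ Finset.Icc 1 M, epsAux m₁ C m * (∑ s, ‖a m s z‖) ^ ((1:ℝ)/m)) =
        ∑ i ∈ Finset.range (M+1), FAux a m₁ C i z := by
    intro M z
    have h1 : (∑ m ∈ Finset.Icc 1 M, epsAux m₁ C m * (∑ s, ‖a m s z‖) ^ ((1:ℝ)/m)) =
        ∑ m ∈ Finset.Icc 1 M, FAux a m₁ C m z := by
      refine Finset.sum_congr rfl fun m hm => ?_
      unfold FAux
      rw [if_pos (Finset.mem_Icc.mp hm).1]
    rw [h1]
    refine Finset.sum_subset (fun i hi => Finset.mem_range.mpr ?_) (fun i hi hni => ?_)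
    · have := (Finset.mem_Icc.mp hi).2; omega
    · have hiM : i < M + 1 := Finset.mem_range.mp hi
      have h0 : ¬ (1 ≤ i) := fun h1' => hni (Finset.mem_Icc.mpr ⟨h1', by omega⟩)
      unfold FAux
      rw [if_neg h0]
  -- the witnesses
  refine ⟨m₁, epsAux m₁ C, Metric.ball o r, hm₁pos, hεpos,
    Metric.ball_mem_nhds o hr,
    fun z hz => hK'Ω (Metric.ball_subset_closedBall hz), ?_, ?_⟩
  · -- uniform convergence on compacts
    intro Kc hKW hKc2
    have hKK' : Kc ⊆ Metric.closedBall o r := hKW.trans Metric.ball_subset_closedBall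
    have hbase := tendstoUniformlyOn_tsum_nat (f := FAux a m₁ C) (s := Kc) hu
      (fun m z hz => by
        rw [Real.norm_of_nonneg (hFnn m z)]; exact hFD m z (hKK' hz))
    intro v hv
    have h2 := hbase v hv
    have h3 := (Filter.tendsto_add_atTop_nat 1).eventually h2
    filter_upwards [h3] with M hM z hz
    have h4 := hM z hz
    have h6 : ((fun z => ∑' m : ℕ, if 1 ≤ m then
            epsAux m₁ C m * (∑ s, ‖a m s z‖) ^ ((1:ℝ)/m) else 0) z,
          ∑ m ∈ Finset.Icc 1 M, epsAux m₁ C m * (∑ s, ‖a m s z‖) ^ ((1:ℝ)/m)) =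
        ((∑' m : ℕ, FAux a m₁ C m z), ∑ i ∈ Finset.range (M+1), FAux a m₁ C i z) := by
      rw [hkey M z]; rfl
    rw [h6]
    exact h4
  · -- the two-sided comparison
    refine ⟨2, one_le_two, fun z hz => ?_⟩
    have hzK : z ∈ Metric.closedBall o r := Metric.ball_subset_closedBall hz
    have hsumF : Summable (fun m => FAux a m₁ C m z) := hFsum z hzK
    set Qz := ∑ d ∈ Finset.Icc 1 m₁, (∑ s', ‖a d s' z‖) ^ ((1:ℝ)/d) with hQz
    have hPQ : (∑ m ∈ Finset.Icc 1 m₁, epsAux m₁ C m * (∑ s, ‖a m s z‖) ^ ((1:ℝ)/m))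
        = Qz := by
      refine Finset.sum_congr rfl fun m hm => ?_
      unfold epsAux
      rw [if_pos (Finset.mem_Icc.mp hm).2, one_mul]
    have hsplit := Summable.sum_add_tsum_nat_add (f := fun m => FAux a m₁ C m z) (m₁+1) hsumF
    have hhead : (∑ i ∈ Finset.range (m₁+1), FAux a m₁ C i z) = Qz := by
      rw [← hkey m₁ z, hPQ]
    have htail : (∑' i : ℕ, FAux a m₁ C (i + (m₁+1)) z) ≤ Qz := by
      have hQz0 : (0:ℝ) ≤ Qz := hQnn z
      have h1 : ∀ i : ℕ, FAux a m₁ C (i+(m₁+1)) z ≤ (1/2:ℝ)^(i+(m₁+1)) * Qz :=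
        fun i => hFQ (i+(m₁+1)) (by omega) z hzK
      have h2 : Summable (fun i : ℕ => FAux a m₁ C (i+(m₁+1)) z) :=
        (summable_nat_add_iff (f := fun m => FAux a m₁ C m z) (m₁+1)).mpr hsumF
      have h3' : Summable (fun i : ℕ => ((1/2:ℝ)^(m₁+1) * Qz) * (1/2:ℝ)^i) :=
        (summable_geometric_of_lt_one (by norm_num) (by norm_num)).mul_left _
      have h3 : Summable (fun i : ℕ => (1/2:ℝ)^(i+(m₁+1)) * Qz) := by
        refine h3'.congr fun i => ?_
        rw [pow_add]; ring
      refine (Summable.tsum_le_tsum h1 h2 h3).trans ?_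
      have h4 : (∑' i : ℕ, (1/2:ℝ)^(i+(m₁+1)) * Qz) =
          ((1/2:ℝ)^(m₁+1) * Qz) * (1 - 1/2)⁻¹ := by
        rw [show (fun i : ℕ => (1/2:ℝ)^(i+(m₁+1)) * Qz) =
            (fun i : ℕ => ((1/2:ℝ)^(m₁+1) * Qz) * (1/2:ℝ)^i) from
          funext fun i => by rw [pow_add]; ring]
        rw [tsum_mul_left, tsum_geometric_of_lt_one (by norm_num) (by norm_num)]
      rw [h4]
      have h5 : (1/2:ℝ)^(m₁+1) ≤ (1/2:ℝ)^1 :=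
        pow_le_pow_of_le_one (by norm_num) (by norm_num) (by omega)
      norm_num at h5 ⊢
      nlinarith
    have hT : (∑' m : ℕ, FAux a m₁ C m z) =
        Qz + ∑' i : ℕ, FAux a m₁ C (i + (m₁+1)) z := by
      rw [← hsplit, hhead]
    have hTnn : (0:ℝ) ≤ ∑' m : ℕ, FAux a m₁ C m z := tsum_nonneg fun m => hFnn m z
    have htsum_eq : (∑' m : ℕ, if 1 ≤ m then
        epsAux m₁ C m * (∑ s, ‖a m s z‖) ^ ((1:ℝ)/m) else 0) =
          ∑' m : ℕ, FAux a m₁ C m z := rfl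
    constructor
    · rw [htsum_eq, hPQ, hT]
      linarith
    · rw [htsum_eq, hPQ, hT]
      have htail0 : (0:ℝ) ≤ ∑' i : ℕ, FAux a m₁ C (i + (m₁+1)) z :=
        tsum_nonneg fun i => hFnn _ z
      linarith [hQnn z]

end LiMIS

end
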